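/- arXiv:1403.3665 — 6 statements merged into one kernel-verified Lean document; each statement's English description precedes it below -/
import Mathlib

section
/- Fix τ₀ ∈ (0,1) and positive reals γ₁, …, γ_K. Among all τ₁, …, τ_K > 0 with Σᵢ τᵢ = 1 − τ₀, the sum Σᵢ τᵢ · log₂(1 + γᵢ·τ₀/τᵢ) is maximized if and only if γᵢ·τ₀/τᵢ is the same constant for all i, namely equal to A·τ₀/(1−τ₀) where A = Σᵢ γᵢ; the unique maximizer is τᵢ* = γᵢ(1−τ₀)/A. -/
/-!
The objective is a perspective of the strictly concave function `x ↦ log₂ (1 + x)`: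
`∑ τᵢ log₂ (1 + γᵢτ₀/τᵢ) = (1 - τ₀) ∑ wᵢ log₂ (1 + γᵢτ₀/τᵢ)` with weights `wᵢ = τᵢ/(1 - τ₀)`,
and `∑ wᵢ γᵢτ₀/τᵢ = Aτ₀/(1 - τ₀)` does not depend on `τ`. Jensen's inequality therefore bounds the
objective by `(1 - τ₀) log₂ (1 + Aτ₀/(1 - τ₀))`, with equality exactly when all the SNRs
`γᵢτ₀/τᵢ` coincide, and the allocation `τᵢ = γᵢ(1 - τ₀)/A` attains the bound.
-/

open Finset Real

theorem strictConcaveOn_logb_one_add {b : ℝ} (hb : 1 < b) :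
    StrictConcaveOn ℝ (Set.Ioi (-1)) fun x ↦ logb b (1 + x) := by
  refine ⟨convex_Ioi _, fun x (hx : -1 < x) y (hy : -1 < y) hxy p q hp hq hpq ↦ ?_⟩
  have hlog := strictConcaveOn_log_Ioi.2 (x := 1 + x) (y := 1 + y)
    (show 0 < 1 + x by linarith) (show 0 < 1 + y by linarith) (by simpa using hxy) hp hq hpq
  have hcombo : p * (1 + x) + q * (1 + y) = 1 + (p * x + q * y) := by
    linear_combination hpq
  simp only [logb, smul_eq_mul, ← add_div, ← mul_div_assoc, hcombo] at hlog ⊢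
  exact div_lt_div_of_pos_right hlog (log_pos hb)

section Perspective

variable {ι : Type*} {s : Set ℝ} {f : ℝ → ℝ} {t : Finset ι} {σ a : ι → ℝ}

theorem sum_div_sum_mul_div_eq (hσ : ∀ i ∈ t, 0 < σ i) :
    ∑ i ∈ t, σ i / (∑ j ∈ t, σ j) * (a i / σ i) = (∑ i ∈ t, a i) / ∑ i ∈ t, σ i := by
  rw [sum_div]
  refine sum_congr rfl fun i hi ↦ ?_
  field_simp [(hσ i hi).ne']

theorem sum_mul_eq_sum_mul_sum_div_mul (hS : ∑ i ∈ t, σ i ≠ 0) (g : ι → ℝ) :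
    ∑ i ∈ t, σ i * g i = (∑ i ∈ t, σ i) * ∑ i ∈ t, σ i / (∑ j ∈ t, σ j) * g i := by
  rw [mul_sum]
  refine sum_congr rfl fun i _ ↦ ?_
  field_simp

theorem sum_div_sum_self (hS : ∑ i ∈ t, σ i ≠ 0) :
    ∑ i ∈ t, σ i / (∑ j ∈ t, σ j) = 1 := by
  rw [← sum_div, div_self hS]

theorem ConcaveOn.sum_mul_map_div_le (hf : ConcaveOn ℝ s f) (hσ : ∀ i ∈ t, 0 < σ i)
    (ha : ∀ i ∈ t, a i / σ i ∈ s) :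
    ∑ i ∈ t, σ i * f (a i / σ i) ≤
      (∑ i ∈ t, σ i) * f ((∑ i ∈ t, a i) / ∑ i ∈ t, σ i) := by
  rcases t.eq_empty_or_nonempty with rfl | ht
  · simp
  have hS : 0 < ∑ i ∈ t, σ i := sum_pos hσ ht
  have jensen := hf.le_map_sum (fun i hi ↦ (div_pos (hσ i hi) hS).le) (sum_div_sum_self hS.ne') ha
  simp only [smul_eq_mul, sum_div_sum_mul_div_eq hσ] at jensen
  rw [sum_mul_eq_sum_mul_sum_div_mul hS.ne']
  exact mul_le_mul_of_nonneg_left jensen hS.le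

theorem StrictConcaveOn.sum_mul_map_div_eq_iff (hf : StrictConcaveOn ℝ s f)
    (hσ : ∀ i ∈ t, 0 < σ i) (ha : ∀ i ∈ t, a i / σ i ∈ s) :
    ∑ i ∈ t, σ i * f (a i / σ i) = (∑ i ∈ t, σ i) * f ((∑ i ∈ t, a i) / ∑ i ∈ t, σ i) ↔
      ∀ i ∈ t, a i / σ i = (∑ i ∈ t, a i) / ∑ i ∈ t, σ i := by
  rcases t.eq_empty_or_nonempty with rfl | ht
  · simp
  have hS : 0 < ∑ i ∈ t, σ i := sum_pos hσ ht
  have jensen := hf.map_sum_eq_iff (fun i hi ↦ div_pos (hσ i hi) hS) (sum_div_sum_self hS.ne') ha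
  simp only [smul_eq_mul, sum_div_sum_mul_div_eq hσ] at jensen
  rw [sum_mul_eq_sum_mul_sum_div_mul hS.ne', mul_right_inj' hS.ne', eq_comm, jensen]

theorem sum_mul_logb_one_add_div_le {b : ℝ} (hb : 1 < b) (ha : ∀ i ∈ t, 0 ≤ a i)
    (hσ : ∀ i ∈ t, 0 < σ i) :
    ∑ i ∈ t, σ i * logb b (1 + a i / σ i) ≤
      (∑ i ∈ t, σ i) * logb b (1 + (∑ i ∈ t, a i) / ∑ i ∈ t, σ i) :=
  (strictConcaveOn_logb_one_add hb).concaveOn.sum_mul_map_div_le hσ fun i hi ↦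
    neg_one_lt_zero.trans_le (div_nonneg (ha i hi) (hσ i hi).le)

theorem sum_mul_logb_one_add_div_eq_iff {b : ℝ} (hb : 1 < b) (ha : ∀ i ∈ t, 0 ≤ a i)
    (hσ : ∀ i ∈ t, 0 < σ i) :
    ∑ i ∈ t, σ i * logb b (1 + a i / σ i) =
        (∑ i ∈ t, σ i) * logb b (1 + (∑ i ∈ t, a i) / ∑ i ∈ t, σ i) ↔
      ∀ i ∈ t, a i / σ i = (∑ i ∈ t, a i) / ∑ i ∈ t, σ i :=
  (strictConcaveOn_logb_one_add hb).sum_mul_map_div_eq_iff hσ fun i hi ↦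
    neg_one_lt_zero.trans_le (div_nonneg (ha i hi) (hσ i hi).le)

end Perspective

theorem mul_div_eq_mul_div_iff {x y z w c : ℝ} (hc : c ≠ 0) (hy : y ≠ 0) (hz : z ≠ 0)
    (hw : w ≠ 0) : x * c / y = z * c / w ↔ y = x * w / z := by
  rw [div_eq_div_iff hy hw, eq_div_iff hz]
  constructor <;> intro h
  · exact mul_right_cancel₀ hc (by linear_combination -h)
  · linear_combination -c * h

/-- Among all positive uplink times summing to 1 − τ₀, the sum throughput is maximized
iff all SNRs γᵢτ₀/τᵢ are equal to Aτ₀/(1−τ₀), i.e. iff τᵢ = γᵢ(1−τ₀)/A. -/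
theorem stmt_3 (K : ℕ) (hK : 0 < K) (γ : Fin K → ℝ) (hγ : ∀ i, 0 < γ i)
    (τ₀ : ℝ) (hτ₀ : τ₀ ∈ Set.Ioo (0 : ℝ) 1)
    (τ : Fin K → ℝ) (hτ : ∀ i, 0 < τ i) (hsum : ∑ i, τ i = 1 - τ₀) :
    ((∀ σ : Fin K → ℝ, (∀ i, 0 < σ i) → ∑ i, σ i = 1 - τ₀ →
        ∑ i, σ i * Real.logb 2 (1 + γ i * τ₀ / σ i) ≤
        ∑ i, τ i * Real.logb 2 (1 + γ i * τ₀ / τ i)) ↔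
      ∀ i, γ i * τ₀ / τ i = (∑ j, γ j) * τ₀ / (1 - τ₀)) ∧
    ((∀ σ : Fin K → ℝ, (∀ i, 0 < σ i) → ∑ i, σ i = 1 - τ₀ →
        ∑ i, σ i * Real.logb 2 (1 + γ i * τ₀ / σ i) ≤
        ∑ i, τ i * Real.logb 2 (1 + γ i * τ₀ / τ i)) ↔
      ∀ i, τ i = γ i * (1 - τ₀) / ∑ j, γ j) := by
  obtain ⟨hτ₀, hτ₀'⟩ := hτ₀
  have hS : 0 < 1 - τ₀ := sub_pos.2 hτ₀'
  have hA : 0 < ∑ j, γ j :=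
    sum_pos (fun i _ ↦ hγ i) (univ_nonempty_iff.2 (Fin.pos_iff_nonempty.1 hK))
  have ha : ∀ i ∈ univ, 0 ≤ γ i * τ₀ := fun i _ ↦ (mul_pos (hγ i) hτ₀).le
  have hle (σ : Fin K → ℝ) (hσ : ∀ i, 0 < σ i) (hσs : ∑ i, σ i = 1 - τ₀) :
      ∑ i, σ i * logb 2 (1 + γ i * τ₀ / σ i) ≤
        (1 - τ₀) * logb 2 (1 + (∑ j, γ j) * τ₀ / (1 - τ₀)) := by
    simpa only [hσs, ← sum_mul] using sum_mul_logb_one_add_div_le one_lt_two ha fun i _ ↦ hσ i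
  have heq (σ : Fin K → ℝ) (hσ : ∀ i, 0 < σ i) (hσs : ∑ i, σ i = 1 - τ₀) :
      ∑ i, σ i * logb 2 (1 + γ i * τ₀ / σ i) =
          (1 - τ₀) * logb 2 (1 + (∑ j, γ j) * τ₀ / (1 - τ₀)) ↔
        ∀ i, γ i * τ₀ / σ i = (∑ j, γ j) * τ₀ / (1 - τ₀) := by
    simpa only [hσs, ← sum_mul, mem_univ, true_imp_iff] using
      sum_mul_logb_one_add_div_eq_iff one_lt_two ha fun i _ ↦ hσ i
  have hratio (σ : Fin K → ℝ) (hσ : ∀ i, 0 < σ i) (i : Fin K) :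
      γ i * τ₀ / σ i = (∑ j, γ j) * τ₀ / (1 - τ₀) ↔ σ i = γ i * (1 - τ₀) / ∑ j, γ j :=
    mul_div_eq_mul_div_iff hτ₀.ne' (hσ i).ne' hA.ne' hS.ne'
  set T : Fin K → ℝ := fun i ↦ γ i * (1 - τ₀) / ∑ j, γ j
  have hT : ∀ i, 0 < T i := fun i ↦ div_pos (mul_pos (hγ i) hS) hA
  have hTs : ∑ i, T i = 1 - τ₀ := by simp only [T, ← sum_div, ← sum_mul]; field_simp
  have hTeq := (heq T hT hTs).2 fun i ↦ (hratio T hT i).2 rfl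
  have hmax : (∀ σ : Fin K → ℝ, (∀ i, 0 < σ i) → ∑ i, σ i = 1 - τ₀ →
        ∑ i, σ i * logb 2 (1 + γ i * τ₀ / σ i) ≤ ∑ i, τ i * logb 2 (1 + γ i * τ₀ / τ i)) ↔
      ∀ i, γ i * τ₀ / τ i = (∑ j, γ j) * τ₀ / (1 - τ₀) := by
    rw [← heq τ hτ hsum]
    exact ⟨fun h ↦ (hle τ hτ hsum).antisymm (hTeq ▸ h T hT hTs),
      fun h σ hσ hσs ↦ h ▸ hle σ hσ hσs⟩
  exact ⟨hmax, hmax.trans (forall_congr' (hratio τ hτ))⟩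
end

section
/- For A > 0, the function F(τ₀) = (1 − τ₀)·log(1 + A·τ₀/(1 − τ₀)) is strictly concave on (0, 1). -/
/-!
Writing `g x = log (1 + A * x)`, the function is `τ ↦ (1 - τ) * g (τ / (1 - τ))`, the perspective
`(u, x) ↦ u * g (x / u)` of the strictly concave `g` restricted to the line `u = 1 - τ`, `x = τ`.
A convex combination of `τ` and `σ` is sent by `τ ↦ τ / (1 - τ)` to a convex combination of their
images with weights proportional to `a * (1 - τ)` and `b * (1 - σ)`, so Jensen's inequality for `g`,
multiplied by `1 - (a * τ + b * σ)`, is the required inequality; it is strict because this line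
meets each ray from the origin only once, i.e. `τ ↦ τ / (1 - τ)` is injective.
-/

open Set Real

lemma div_one_sub_injOn : InjOn (fun τ : ℝ => τ / (1 - τ)) (Iio 1) := by
  intro τ hτ σ hσ h
  have hτ' : (1 - τ) ≠ 0 := by simp only [mem_Iio] at hτ; linarith
  have hσ' : (1 - σ) ≠ 0 := by simp only [mem_Iio] at hσ; linarith
  rw [div_eq_div_iff hτ' hσ'] at h
  linarith

lemma div_one_sub_convexCombination {τ σ a b : ℝ} (hτ : τ < 1) (hσ : σ < 1) (ha : 0 ≤ a)
    (hb : 0 ≤ b) (hab : a + b = 1) :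
    0 < 1 - (a * τ + b * σ) ∧
    a * (1 - τ) / (1 - (a * τ + b * σ)) + b * (1 - σ) / (1 - (a * τ + b * σ)) = 1 ∧
    a * (1 - τ) / (1 - (a * τ + b * σ)) * (τ / (1 - τ)) +
      b * (1 - σ) / (1 - (a * τ + b * σ)) * (σ / (1 - σ)) =
      (a * τ + b * σ) / (1 - (a * τ + b * σ)) := by
  have hp := sub_pos.2 hτ
  have hq := sub_pos.2 hσ
  have hT : 1 - (a * τ + b * σ) = a * (1 - τ) + b * (1 - σ) := by linear_combination -hab
  have hpos : 0 < 1 - (a * τ + b * σ) := hT ▸ convex_Ioi (0 : ℝ) hp hq ha hb hab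
  refine ⟨hpos, ?_, ?_⟩
  · rw [← add_div, ← hT, div_self hpos.ne']
  · field_simp

theorem StrictConcaveOn.one_sub_mul_comp_div_one_sub {s : Set ℝ} {g : ℝ → ℝ}
    (hg : StrictConcaveOn ℝ s g) :
    StrictConcaveOn ℝ (Iio 1 ∩ (fun τ => τ / (1 - τ)) ⁻¹' s)
      (fun τ => (1 - τ) * g (τ / (1 - τ))) := by
  refine ⟨?_, ?_⟩
  · rintro τ ⟨hτ, hτs⟩ σ ⟨hσ, hσs⟩ a b ha hb hab
    obtain ⟨hT, hw, hcomb⟩ := div_one_sub_convexCombination hτ hσ ha hb hab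
    refine ⟨by simp only [mem_Iio, smul_eq_mul]; linarith, ?_⟩
    simp only [mem_preimage, smul_eq_mul] at hτs hσs ⊢
    rw [← hcomb]
    exact hg.1 hτs hσs (div_nonneg (mul_nonneg ha (sub_pos.2 hτ).le) hT.le)
      (div_nonneg (mul_nonneg hb (sub_pos.2 hσ).le) hT.le) hw
  · rintro τ ⟨hτ, hτs⟩ σ ⟨hσ, hσs⟩ hτσ a b ha hb hab
    obtain ⟨hT, hw, hcomb⟩ := div_one_sub_convexCombination hτ hσ ha.le hb.le hab
    simp only [mem_Iio, mem_preimage, smul_eq_mul] at hτ hσ hτs hσs ⊢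
    have hp := sub_pos.2 hτ
    have hq := sub_pos.2 hσ
    have hjensen := hg.2 hτs hσs (div_one_sub_injOn.ne hτ hσ hτσ)
      (div_pos (mul_pos ha hp) hT) (div_pos (mul_pos hb hq) hT) hw
    simp only [smul_eq_mul, hcomb] at hjensen
    rw [← div_lt_iff₀' hT]
    convert hjensen using 1
    field_simp

lemma strictConcaveOn_log_one_add_mul {A : ℝ} (hA : 0 < A) :
    StrictConcaveOn ℝ (Ici 0) (fun x => log (1 + A * x)) := by
  have haff : ConcaveOn ℝ (Ici 0) (fun x : ℝ => 1 + A * x) :=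
    (concaveOn_const 1 (convex_Ici 0)).add ((LinearMap.mul ℝ ℝ A).concaveOn (convex_Ici 0))
  have himage : (fun x : ℝ => 1 + A * x) '' Ici 0 ⊆ Ioi 0 := by
    rintro _ ⟨x, hx, rfl⟩
    exact lt_add_of_pos_of_le one_pos (mul_nonneg hA.le hx)
  refine (strictConcaveOn_log_Ioi.subset himage ((convex_Ici 0).affinity 1 A)).comp_concaveOn haff
    (strictMonoOn_log.monotoneOn.mono himage)
    fun _ _ _ _ h => mul_left_cancel₀ hA.ne' (add_left_cancel h)

/-- For A > 0, F(τ₀) = (1 − τ₀)·log(1 + Aτ₀/(1 − τ₀)) is strictly concave on (0, 1). -/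
theorem stmt_5 (A : ℝ) (hA : 0 < A) :
    StrictConcaveOn ℝ (Set.Ioo (0 : ℝ) 1)
      (fun τ₀ => (1 - τ₀) * Real.log (1 + A * τ₀ / (1 - τ₀))) := by
  simp_rw [mul_div_assoc]
  exact (strictConcaveOn_log_one_add_mul hA).one_sub_mul_comp_div_one_sub.subset
    (fun τ hτ => ⟨hτ.2, div_nonneg hτ.1.le (sub_pos.2 hτ.2).le⟩) (convex_Ioo 0 1)
end

section
/- For A > 0, the unique maximizer of F(τ₀) = (1 − τ₀)·log₂(1 + A·τ₀/(1 − τ₀)) over τ₀ ∈ (0,1) is τ₀* = (z* − 1)/(A + z* − 1), where z* > 1 is the unique solution of z·ln z − z + 1 = A. -/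
/-!
Substituting `x = 1 + A τ₀ / (1 - τ₀)` gives `(1 - τ₀) ln x ≤ A / z*`: indeed the tangent line
of the concave function `z* ln` at `z*` gives `z* ln x ≤ z* ln z* + x - z* = A + x - 1`, and
`(1 - τ₀)(A + x - 1) = A`. Equality holds only at `x = z*`, i.e. at `τ₀ = τ₀*`.
-/

open Real Set

lemma mul_log_lt_mul_log_add_sub {x z : ℝ} (hx : 0 < x) (hz : 0 < z) (hne : x ≠ z) :
    z * log x < z * log z + (x - z) := by
  have hlog : log (x / z) < x / z - 1 :=
    log_lt_sub_one_of_pos (div_pos hx hz) (by rwa [ne_eq, div_eq_one_iff_eq hz.ne'])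
  rw [log_div hx.ne' hz.ne'] at hlog
  have := mul_lt_mul_of_pos_left hlog hz
  rw [mul_sub, mul_sub, mul_div_cancel₀ x hz.ne', mul_one] at this
  linarith

noncomputable def sumThroughput (A t : ℝ) : ℝ := (1 - t) * logb 2 (1 + A * t / (1 - t))

section Optimum

variable {A z : ℝ} (hA : 0 < A) (hz : 1 < z) (hzA : z * log z - z + 1 = A)
include hA hz

lemma optimalFraction_mem_Ioo : (z - 1) / (A + z - 1) ∈ Ioo 0 1 :=
  ⟨div_pos (by linarith) (by linarith), (div_lt_one (by linarith)).2 (by linarith)⟩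

include hzA

lemma sumThroughput_optimalFraction :
    sumThroughput A ((z - 1) / (A + z - 1)) = A / (z * log 2) := by
  have hd : A + z - 1 ≠ 0 := by linarith
  have h1t : 1 - (z - 1) / (A + z - 1) = A / (A + z - 1) := by field_simp; ring
  have hx : 1 + A * ((z - 1) / (A + z - 1)) / (1 - (z - 1) / (A + z - 1)) = z := by
    rw [h1t]; field_simp; ring
  have hlogz : log z ≠ 0 := (log_pos hz).ne'
  have hzlog : A + z - 1 = z * log z := by linarith
  rw [sumThroughput, hx, h1t, hzlog, logb]
  field_simp

lemma sumThroughput_lt {t : ℝ} (ht : t ∈ Ioo 0 1) (hne : t ≠ (z - 1) / (A + z - 1)) :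
    sumThroughput A t < A / (z * log 2) := by
  obtain ⟨ht0, ht1⟩ := ht
  have h1t : 0 < 1 - t := sub_pos.2 ht1
  set x := 1 + A * t / (1 - t) with hx
  have hx0 : 0 < x := by positivity
  have hxz : x ≠ z := by
    intro h
    apply hne
    have hd : A + x - 1 ≠ 0 := by linarith
    rw [← h, eq_div_iff hd, hx]
    field_simp
    ring
  have hlog : (1 - t) * log x < A / z := by
    rw [lt_div_iff₀ (by linarith)]
    calc (1 - t) * log x * z = (1 - t) * (z * log x) := by ring
      _ < (1 - t) * (z * log z + (x - z)) := by
        gcongr; exact mul_log_lt_mul_log_add_sub hx0 (by linarith) hxz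
      _ = A := by rw [hx]; field_simp; linear_combination (1 - t) * hzA
  rw [sumThroughput, ← hx, logb, ← mul_div_assoc, ← div_div]
  exact div_lt_div_of_pos_right hlog (log_pos one_lt_two)

end Optimum

/-- The unique maximizer of F(τ₀) = (1 − τ₀)·log₂(1 + Aτ₀/(1 − τ₀)) over (0,1)
is τ₀* = (z* − 1)/(A + z* − 1) where z* > 1 solves z ln z − z + 1 = A. -/
theorem stmt_6 (A z : ℝ) (hA : 0 < A) (hz : 1 < z)
    (hzA : z * Real.log z - z + 1 = A) :
    ((z - 1) / (A + z - 1) ∈ Set.Ioo (0 : ℝ) 1) ∧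
    (∀ t ∈ Set.Ioo (0 : ℝ) 1,
      (1 - t) * Real.logb 2 (1 + A * t / (1 - t)) ≤
      (1 - (z - 1) / (A + z - 1)) *
        Real.logb 2 (1 + A * ((z - 1) / (A + z - 1)) / (1 - (z - 1) / (A + z - 1)))) ∧
    (∀ t ∈ Set.Ioo (0 : ℝ) 1,
      (∀ s ∈ Set.Ioo (0 : ℝ) 1,
        (1 - s) * Real.logb 2 (1 + A * s / (1 - s)) ≤
        (1 - t) * Real.logb 2 (1 + A * t / (1 - t))) →
      t = (z - 1) / (A + z - 1)) := by
  have hopt := sumThroughput_optimalFraction hA hz hzA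
  refine ⟨optimalFraction_mem_Ioo hA hz, fun t ht => ?_, fun t ht hmax => ?_⟩
  · change sumThroughput A t ≤ sumThroughput A _
    rcases eq_or_ne t ((z - 1) / (A + z - 1)) with rfl | hne
    · exact le_rfl
    · exact hopt ▸ (sumThroughput_lt hA hz hzA ht hne).le
  · by_contra hne
    have hle : sumThroughput A _ ≤ sumThroughput A t := hmax _ (optimalFraction_mem_Ioo hA hz)
    exact (hopt ▸ hle).not_gt (sumThroughput_lt hA hz hzA ht hne)
end

section
/- Let A > 0 and let z* > 1 solve z·ln z − z + 1 = A. Then the time allocation τ₀* = (z*−1)/(A+z*−1) and τᵢ* = γᵢ/(A+z*−1) for i = 1,…,K (with A = Σᵢ γᵢ, γᵢ > 0) satisfies Σ_{i=0}^K τᵢ* = 1 and maximizes Σᵢ τᵢ·log₂(1 + γᵢ·τ₀/τᵢ) over all nonnegative (τ₀,…,τ_K) with Σᵢ τᵢ ≤ 1. -/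
/-- The allocation τ₀* = (z*−1)/(A+z*−1), τᵢ* = γᵢ/(A+z*−1) uses the whole frame and
maximizes the sum throughput over all nonnegative allocations with total time ≤ 1. -/
theorem stmt_7 (K : ℕ) (γ : Fin K → ℝ) (hγ : ∀ i, 0 < γ i) (z : ℝ) (hz : 1 < z)
    (hzA : z * Real.log z - z + 1 = ∑ i, γ i) :
    ((z - 1) / ((∑ i, γ i) + z - 1) + ∑ i, γ i / ((∑ j, γ j) + z - 1) = 1) ∧
    (∀ (t0 : ℝ) (t : Fin K → ℝ), 0 ≤ t0 → (∀ i, 0 ≤ t i) → t0 + ∑ i, t i ≤ 1 →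
      ∑ i, t i * Real.logb 2 (1 + γ i * t0 / t i) ≤
      ∑ i, (γ i / ((∑ j, γ j) + z - 1)) *
        Real.logb 2 (1 + γ i * ((z - 1) / ((∑ j, γ j) + z - 1)) /
          (γ i / ((∑ j, γ j) + z - 1)))) := by
  have hz0 : (0:ℝ) < z := lt_trans one_pos hz
  have hlz : 0 < Real.log z := Real.log_pos hz
  have hl2 : 0 < Real.log 2 := Real.log_pos one_lt_two
  set A := ∑ i, γ i with hA
  -- A > 0
  have hinv : Real.log z⁻¹ < z⁻¹ - 1 :=
    Real.log_lt_sub_one_of_pos (by positivity) (by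
      intro h; rw [inv_eq_one] at h; exact hz.ne' h)
  rw [Real.log_inv] at hinv
  have hApos : 0 < A := by
    rw [← hzA]
    nlinarith [mul_lt_mul_of_pos_left hinv hz0, mul_inv_cancel₀ (ne_of_gt hz0)]
  have hS : A + z - 1 = z * Real.log z := by linarith
  have hSpos : 0 < A + z - 1 := by linarith
  constructor
  · rw [← Finset.sum_div]
    field_simp
    rw [← hA]
    ring
  · intro t0 t ht0 ht htsum
    -- simplify RHS
    have hrw : ∀ i ∈ Finset.univ, (γ i / (A + z - 1)) *
        Real.logb 2 (1 + γ i * ((z - 1) / (A + z - 1)) / (γ i / (A + z - 1))) =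
        (γ i / (A + z - 1)) * Real.logb 2 z := by
      intro i _
      congr 1
      have h1 : γ i * ((z - 1) / (A + z - 1)) / (γ i / (A + z - 1)) = z - 1 := by
        field_simp
        exact mul_div_cancel_left₀ _ (ne_of_gt (hγ i))
      rw [h1]; ring_nf
    rw [Finset.sum_congr rfl hrw, ← Finset.sum_mul, ← Finset.sum_div, ← hA]
    -- now RHS is (A/(A+z-1)) * logb 2 z = (A/z)/log 2
    have hRHS : A / (A + z - 1) * Real.logb 2 z = (A / z) / Real.log 2 := by
      rw [Real.logb, hS]
      field_simp
    rw [hRHS]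
    -- rewrite LHS as a single division by log 2
    have hLHS : ∑ i, t i * Real.logb 2 (1 + γ i * t0 / t i) =
        (∑ i, t i * Real.log (1 + γ i * t0 / t i)) / Real.log 2 := by
      rw [Finset.sum_div]
      refine Finset.sum_congr rfl fun i _ => ?_
      rw [Real.logb]; ring
    rw [hLHS]
    gcongr
    -- key termwise bound
    have key : ∀ i ∈ Finset.univ, t i * Real.log (1 + γ i * t0 / t i) ≤
        t i * (Real.log z - 1) + (t i + γ i * t0) / z := by
      intro i _
      rcases eq_or_lt_of_le (ht i) with h | h
      · rw [← h]
        have h0 : (0:ℝ) ≤ γ i * t0 / z := div_nonneg (mul_nonneg (hγ i).le ht0) hz0.le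
        simp
        linarith [h0]
      · have hy : 0 < 1 + γ i * t0 / t i := by
          have : 0 ≤ γ i * t0 / t i := div_nonneg (mul_nonneg (hγ i).le ht0) h.le
          linarith
        have h1 : Real.log ((1 + γ i * t0 / t i) / z) ≤ (1 + γ i * t0 / t i) / z - 1 :=
          Real.log_le_sub_one_of_pos (div_pos hy hz0)
        rw [Real.log_div (ne_of_gt hy) (ne_of_gt hz0)] at h1
        have h2 : Real.log (1 + γ i * t0 / t i) ≤ Real.log z + (1 + γ i * t0 / t i) / z - 1 := by
          linarith
        have h3 := mul_le_mul_of_nonneg_left h2 (le_of_lt h)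
        have expand : t i * (Real.log z + (1 + γ i * t0 / t i) / z - 1) =
            t i * (Real.log z - 1) + (t i + γ i * t0) / z := by
          field_simp
          ring
        linarith [h3, expand.le, expand.ge]
    have hsum := Finset.sum_le_sum key
    set T := ∑ i, t i with hT
    have hT0 : 0 ≤ T := Finset.sum_nonneg fun i _ => ht i
    have e1 : ∑ i, (t i * (Real.log z - 1) + (t i + γ i * t0) / z) =
        T * (Real.log z - 1) + (T + A * t0) / z := by
      rw [Finset.sum_add_distrib, ← Finset.sum_mul, ← Finset.sum_div, Finset.sum_add_distrib,
        ← Finset.sum_mul]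
    rw [e1] at hsum
    refine le_trans hsum ?_
    have hX : T * (Real.log z - 1) + (T + A * t0) / z = (A * (T + t0)) / z := by
      have e2 : (Real.log z - 1) * z + 1 = A := by linarith
      field_simp
      nlinarith [e2]
    rw [hX]
    gcongr
    nlinarith [mul_le_mul_of_nonneg_left htsum hApos.le]
end

section
/- Define g(τ₀) = max{ min_{i} τᵢ·log₂(1 + γᵢ·τ₀/τᵢ) : τᵢ ∈ [0,1] ∀i, Σᵢ τᵢ ≤ 1 − τ₀ }. Then g is concave on [0, 1]; moreover for distinct t₁, t₂ ∈ (0,1) and θ ∈ (0,1), g(θt₁ + (1−θ)t₂) > θg(t₁) + (1−θ)g(t₂) (strict concavity). -/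
/-!
User `i`'s throughput `x log₂(1 + c/x)`, with energy `c = γᵢ τ₀` and time share `x = τᵢ`, is the
perspective of the concave function `u ↦ log₂(1 + u)`, hence jointly concave in `(c, x)`. So the
minimum over the users is jointly concave in `(τ₀, τ)` on the convex graph of `T`, and maximising
over the fibres of the graph preserves concavity.

The perspective is positively homogeneous, hence not strictly concave. For strict concavity take
optimal allocations `σ₁, σ₂` at `t₁ ≠ t₂` that exhaust their budgets `1 - t₁ ≠ 1 - t₂`: some user
has `t₁ / σ₁ᵢ ≠ t₂ / σ₂ᵢ`, so under the averaged allocation that user strictly beats the average of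
the two optima, and moving a little of its time to the other users lifts all of them above it.
-/

open Real Set

theorem ConcaveOn.finset_inf' {ι E : Type*} [AddCommMonoid E] [SMul ℝ E] {s : Set E}
    {t : Finset ι} (ht : t.Nonempty) {f : ι → E → ℝ} (hf : ∀ i ∈ t, ConcaveOn ℝ s (f i)) :
    ConcaveOn ℝ s fun x => t.inf' ht fun i => f i x := by
  obtain ⟨i₀, hi₀⟩ := ht
  refine ⟨(hf i₀ hi₀).1, fun x hx y hy a b ha hb hab => Finset.le_inf' _ _ fun i hi => ?_⟩
  calc a • t.inf' _ (fun j => f j x) + b • t.inf' _ (fun j => f j y) ≤ a • f i x + b • f i y := by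
        gcongr <;> exact Finset.inf'_le _ hi
    _ ≤ f i (a • x + b • y) := (hf i hi).2 hx hy ha hb hab

theorem ConcaveOn.sSup_image {E F : Type*} [AddCommGroup E] [Module ℝ E] [AddCommGroup F]
    [Module ℝ F] {s : Set E} {T : E → Set F} {Φ : E → F → ℝ}
    (hΦ : ConcaveOn ℝ {p : E × F | p.1 ∈ s ∧ p.2 ∈ T p.1} fun p => Φ p.1 p.2)
    (hT : ∀ x ∈ s, (T x).Nonempty) (hbdd : ∀ x ∈ s, BddAbove (Φ x '' T x)) :
    ConcaveOn ℝ s fun x => sSup (Φ x '' T x) := by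
  have hcomb : ∀ x ∈ s, ∀ y ∈ s, ∀ u ∈ T x, ∀ v ∈ T y, ∀ ⦃a b : ℝ⦄, 0 ≤ a → 0 ≤ b → a + b = 1 →
      a • x + b • y ∈ s ∧ a • u + b • v ∈ T (a • x + b • y) :=
    fun x hx y hy u hu v hv _ _ ha hb hab =>
      hΦ.1 (x := (x, u)) (y := (y, v)) ⟨hx, hu⟩ ⟨hy, hv⟩ ha hb hab
  refine ⟨fun x hx y hy a b ha hb hab => ?_, fun x hx y hy a b ha hb hab => ?_⟩
  · obtain ⟨u, hu⟩ := hT x hx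
    obtain ⟨v, hv⟩ := hT y hy
    exact (hcomb x hx y hy u hu v hv ha hb hab).1
  have hA := (hT x hx).image (Φ x)
  have hB := (hT y hy).image (Φ y)
  rw [← Real.sSup_smul_of_nonneg ha, ← Real.sSup_smul_of_nonneg hb,
    ← csSup_add (hA.smul_set) ((hbdd x hx).smul_of_nonneg ha) (hB.smul_set)
      ((hbdd y hy).smul_of_nonneg hb)]
  refine csSup_le (hA.smul_set.add hB.smul_set) ?_
  rintro _ ⟨_, ⟨_, ⟨u, hu, rfl⟩, rfl⟩, _, ⟨_, ⟨v, hv, rfl⟩, rfl⟩, rfl⟩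
  obtain ⟨hs, hT'⟩ := hcomb x hx y hy u hu v hv ha hb hab
  exact (hΦ.2 (x := (x, u)) (y := (y, v)) ⟨hx, hu⟩ ⟨hy, hv⟩ ha hb hab).trans
    (le_csSup (hbdd _ hs) ⟨_, hT', rfl⟩)

section Perspective

variable {f : ℝ → ℝ} {s : Set ℝ} {c₁ c₂ x₁ x₂ a b : ℝ}

theorem ConcaveOn.perspective_add_le (hf : ConcaveOn ℝ s f) (h₁ : c₁ / x₁ ∈ s)
    (h₂ : c₂ / x₂ ∈ s) (hx₁ : 0 < x₁) (hx₂ : 0 < x₂) (ha : 0 ≤ a) (hb : 0 ≤ b) (hab : a + b = 1) :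
    a * (x₁ * f (c₁ / x₁)) + b * (x₂ * f (c₂ / x₂)) ≤
      (a * x₁ + b * x₂) * f ((a * c₁ + b * c₂) / (a * x₁ + b * x₂)) := by
  have hA : 0 < a * x₁ + b * x₂ := by
    rcases ha.eq_or_lt with rfl | ha
    · simp [show b = 1 by linarith, hx₂]
    · positivity
  have key := hf.2 h₁ h₂ (by positivity : 0 ≤ a * x₁ / (a * x₁ + b * x₂))
    (by positivity : 0 ≤ b * x₂ / (a * x₁ + b * x₂)) (by field_simp)
  rw [smul_eq_mul, smul_eq_mul, smul_eq_mul, smul_eq_mul,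
    show a * x₁ / (a * x₁ + b * x₂) * (c₁ / x₁) + b * x₂ / (a * x₁ + b * x₂) * (c₂ / x₂) =
      (a * c₁ + b * c₂) / (a * x₁ + b * x₂) by field_simp] at key
  calc a * (x₁ * f (c₁ / x₁)) + b * (x₂ * f (c₂ / x₂))
      = (a * x₁ + b * x₂) * (a * x₁ / (a * x₁ + b * x₂) * f (c₁ / x₁) +
          b * x₂ / (a * x₁ + b * x₂) * f (c₂ / x₂)) := by field_simp
    _ ≤ _ := mul_le_mul_of_nonneg_left key hA.le

theorem StrictConcaveOn.perspective_add_lt (hf : StrictConcaveOn ℝ s f) (h₁ : c₁ / x₁ ∈ s)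
    (h₂ : c₂ / x₂ ∈ s) (hne : c₁ / x₁ ≠ c₂ / x₂) (hx₁ : 0 < x₁) (hx₂ : 0 < x₂) (ha : 0 < a)
    (hb : 0 < b) :
    a * (x₁ * f (c₁ / x₁)) + b * (x₂ * f (c₂ / x₂)) <
      (a * x₁ + b * x₂) * f ((a * c₁ + b * c₂) / (a * x₁ + b * x₂)) := by
  have hA : 0 < a * x₁ + b * x₂ := by positivity
  have key := hf.2 h₁ h₂ hne (by positivity : 0 < a * x₁ / (a * x₁ + b * x₂))
    (by positivity : 0 < b * x₂ / (a * x₁ + b * x₂)) (by field_simp)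
  rw [smul_eq_mul, smul_eq_mul, smul_eq_mul, smul_eq_mul,
    show a * x₁ / (a * x₁ + b * x₂) * (c₁ / x₁) + b * x₂ / (a * x₁ + b * x₂) * (c₂ / x₂) =
      (a * c₁ + b * c₂) / (a * x₁ + b * x₂) by field_simp] at key
  calc a * (x₁ * f (c₁ / x₁)) + b * (x₂ * f (c₂ / x₂))
      = (a * x₁ + b * x₂) * (a * x₁ / (a * x₁ + b * x₂) * f (c₁ / x₁) +
          b * x₂ / (a * x₁ + b * x₂) * f (c₂ / x₂)) := by field_simp
    _ < _ := mul_lt_mul_of_pos_left key hA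

end Perspective

theorem strictConcaveOn_logb_one_add_s10 : StrictConcaveOn ℝ (Ici 0) fun u => logb 2 (1 + u) := by
  refine ⟨convex_Ici 0, fun x hx y hy hxy a b ha hb hab => ?_⟩
  have key := strictConcaveOn_log_Ioi.2 (x := 1 + x) (y := 1 + y)
    (by rw [Set.mem_Ioi]; linarith [Set.mem_Ici.1 hx])
    (by rw [Set.mem_Ioi]; linarith [Set.mem_Ici.1 hy])
    (by simpa using hxy) ha hb hab
  simp only [smul_eq_mul] at key
  rw [show a * (1 + x) + b * (1 + y) = 1 + (a * x + b * y) by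
    linear_combination hab] at key
  simp only [smul_eq_mul, logb]
  calc a * (log (1 + x) / log 2) + b * (log (1 + y) / log 2)
      = (a * log (1 + x) + b * log (1 + y)) / log 2 := by ring
    _ < _ := div_lt_div_of_pos_right key (log_pos one_lt_two)

-- At `x = 0` this is `0`, the continuous extension.
noncomputable def throughput (c x : ℝ) : ℝ := x * logb 2 (1 + c / x)

section Throughput

variable {c c' c₁ c₂ x y x₁ x₂ a b : ℝ}

@[simp]
theorem throughput_zero_right (c : ℝ) : throughput c 0 = 0 := by
  simp [throughput]

theorem throughput_mul_mul (r c x : ℝ) : throughput (r * c) (r * x) = r * throughput c x := by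
  rcases eq_or_ne r 0 with rfl | hr
  · simp
  · rw [throughput, throughput, mul_div_mul_left _ _ hr, mul_assoc]

theorem throughput_pos (hc : 0 < c) (hx : 0 < x) : 0 < throughput c x :=
  mul_pos hx (logb_pos one_lt_two (lt_add_of_pos_right 1 (div_pos hc hx)))

theorem throughput_le (hc : 0 ≤ c) (hx : 0 ≤ x) : throughput c x ≤ c / log 2 := by
  rcases hx.eq_or_lt with rfl | hx
  · simpa using div_nonneg hc (log_pos one_lt_two).le
  · have hlog : log (1 + c / x) ≤ c / x := by
      linarith [log_le_sub_one_of_pos (by positivity : 0 < 1 + c / x)]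
    rw [throughput, logb, ← mul_div_assoc]
    gcongr
    calc x * log (1 + c / x) ≤ x * (c / x) := by gcongr
      _ = c := by field_simp

theorem throughput_mono_left (hc : 0 ≤ c) (hcc' : c ≤ c') (hx : 0 ≤ x) :
    throughput c x ≤ throughput c' x := by
  rcases hx.eq_or_lt with rfl | hx
  · simp
  · exact mul_le_mul_of_nonneg_left (logb_le_logb_of_le one_lt_two (by positivity) (by gcongr))
      hx.le

theorem strictMonoOn_throughput (hc : 0 < c) : StrictMonoOn (throughput c) (Ici 0) := by
  intro x hx y hy hxy
  rcases (mem_Ici.1 hx).eq_or_lt with rfl | hx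
  · simpa using throughput_pos hc hxy
  have hy : 0 < y := hx.trans hxy
  -- strict concavity between `0` and `c / x`, at the point `c / y = (x / y) • (c / x)`
  have key := strictConcaveOn_logb_one_add_s10.2 (x := c / x) (y := 0) (div_pos hc hx).le
    Set.self_mem_Ici (div_pos hc hx).ne' (div_pos hx hy) (sub_pos.2 ((div_lt_one hy).2 hxy))
    (by ring)
  simp only [smul_eq_mul, add_zero, logb_one, mul_zero] at key
  rw [show x / y * (c / x) = c / y by field_simp] at key
  calc throughput c x = y * (x / y * logb 2 (1 + c / x)) := by rw [throughput]; field_simp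
    _ < y * logb 2 (1 + c / y) := mul_lt_mul_of_pos_left key hy

theorem throughput_add_le (hc₁ : 0 ≤ c₁) (hc₂ : 0 ≤ c₂) (hx₁ : 0 ≤ x₁) (hx₂ : 0 ≤ x₂) (ha : 0 ≤ a)
    (hb : 0 ≤ b) (hab : a + b = 1) :
    a * throughput c₁ x₁ + b * throughput c₂ x₂ ≤
      throughput (a * c₁ + b * c₂) (a * x₁ + b * x₂) := by
  rcases hx₁.eq_or_lt with rfl | hx₁
  · simp only [throughput_zero_right, mul_zero, zero_add]
    rw [← throughput_mul_mul]
    exact throughput_mono_left (by positivity) (by linarith [mul_nonneg ha hc₁]) (by positivity)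
  rcases hx₂.eq_or_lt with rfl | hx₂
  · simp only [throughput_zero_right, mul_zero, add_zero]
    rw [← throughput_mul_mul]
    exact throughput_mono_left (by positivity) (by linarith [mul_nonneg hb hc₂]) (by positivity)
  exact strictConcaveOn_logb_one_add_s10.concaveOn.perspective_add_le (div_nonneg hc₁ hx₁.le)
    (div_nonneg hc₂ hx₂.le) hx₁ hx₂ ha hb hab

theorem throughput_add_lt (hc₁ : 0 ≤ c₁) (hc₂ : 0 ≤ c₂) (hx₁ : 0 < x₁) (hx₂ : 0 < x₂)
    (hne : c₁ / x₁ ≠ c₂ / x₂) (ha : 0 < a) (hb : 0 < b) :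
    a * throughput c₁ x₁ + b * throughput c₂ x₂ < throughput (a * c₁ + b * c₂) (a * x₁ + b * x₂) :=
  strictConcaveOn_logb_one_add_s10.perspective_add_lt (div_nonneg hc₁ hx₁.le) (div_nonneg hc₂ hx₂.le)
    hne hx₁ hx₂ ha hb

theorem mul_throughput_le (hc : 0 ≤ c) (hx : 0 ≤ x) (ha : 0 ≤ a) (ha₁ : a ≤ 1) :
    a * throughput c x ≤ throughput c (a * x) := by
  have h := throughput_add_le hc hc hx le_rfl ha (sub_nonneg.2 ha₁) (add_sub_cancel a 1)
  rwa [throughput_zero_right, mul_zero, add_zero, ← add_mul, add_sub_cancel, one_mul,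
    add_zero] at h

theorem continuousOn_throughput (hc : 0 < c) : ContinuousOn (throughput c) (Ici 0) := by
  have hlog : ContinuousOn (fun x => x * log (x + c)) (Ici 0) :=
    continuousOn_id.mul ((continuousOn_id.add continuousOn_const).log fun x hx =>
      (show x + c ≠ 0 by linarith [mem_Ici.1 hx]))
  refine ((hlog.sub continuous_mul_log.continuousOn).div_const (log 2)).congr fun x hx => ?_
  rcases (mem_Ici.1 hx).eq_or_lt with rfl | hx
  · simp
  · show throughput c x = (x * log (x + c) - x * log x) / log 2
    rw [throughput, logb, show 1 + c / x = (x + c) / x by field_simp,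
      log_div (by positivity) hx.ne']
    ring

end Throughput

def timeShares (K : ℕ) (t : ℝ) : Set (Fin K → ℝ) :=
  {τ | (∀ i, τ i ∈ Icc (0 : ℝ) 1) ∧ ∑ i, τ i ≤ 1 - t}

section TimeShares

variable {K : ℕ} {t : ℝ} {τ : Fin K → ℝ}

theorem mem_timeShares_iff (ht : 0 ≤ t) :
    τ ∈ timeShares K t ↔ (∀ i, 0 ≤ τ i) ∧ ∑ i, τ i ≤ 1 - t := by
  refine ⟨fun h => ⟨fun i => (h.1 i).1, h.2⟩, fun h => ⟨fun i => ⟨h.1 i, ?_⟩, h.2⟩⟩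
  calc τ i ≤ ∑ j, τ j := Finset.single_le_sum (fun j _ => h.1 j) (Finset.mem_univ i)
    _ ≤ 1 := by linarith [h.2]

theorem zero_mem_timeShares (ht : t ≤ 1) : 0 ∈ timeShares K t :=
  ⟨fun _ => ⟨le_rfl, zero_le_one⟩, by simpa using ht⟩

theorem isCompact_timeShares : IsCompact (timeShares K t) := by
  have h : timeShares K t = (Set.univ.pi fun _ => Icc 0 1) ∩ {τ | ∑ i, τ i ≤ 1 - t} := by
    ext τ
    simp only [timeShares, Set.mem_ofPred_eq, Set.mem_inter_iff, Set.mem_univ_pi]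
  rw [h]
  exact (isCompact_univ_pi fun _ => isCompact_Icc).inter_right
    (isClosed_le (continuous_finsetSum _ fun i _ => continuous_apply i) continuous_const)

theorem smul_add_smul_mem_timeShares {t₁ t₂ a b : ℝ} {τ₁ τ₂ : Fin K → ℝ}
    (h₁ : τ₁ ∈ timeShares K t₁) (h₂ : τ₂ ∈ timeShares K t₂) (ha : 0 ≤ a) (hb : 0 ≤ b)
    (hab : a + b = 1) : a • τ₁ + b • τ₂ ∈ timeShares K (a * t₁ + b * t₂) := by
  refine ⟨fun i => (convex_Icc 0 1) (h₁.1 i) (h₂.1 i) ha hb hab, ?_⟩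
  simp only [Pi.add_apply, Pi.smul_apply, smul_eq_mul, Finset.sum_add_distrib, ← Finset.mul_sum]
  nlinarith [h₁.2, h₂.2]

theorem convex_graph_timeShares :
    Convex ℝ {p : ℝ × (Fin K → ℝ) | p.1 ∈ Icc 0 1 ∧ p.2 ∈ timeShares K p.1} :=
  fun _ hp _ hq _ _ ha hb hab =>
    ⟨convex_Icc 0 1 hp.1 hq.1 ha hb hab, smul_add_smul_mem_timeShares hp.2 hq.2 ha hb hab⟩

end TimeShares

section MinThroughput

variable {K : ℕ} [Nonempty (Fin K)] {γ : Fin K → ℝ} {t m : ℝ} {τ : Fin K → ℝ}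

noncomputable def minThroughput (γ : Fin K → ℝ) (t : ℝ) (τ : Fin K → ℝ) : ℝ :=
  Finset.univ.inf' Finset.univ_nonempty fun i => throughput (γ i * t) (τ i)

noncomputable def maxMinThroughput (γ : Fin K → ℝ) (t : ℝ) : ℝ :=
  sSup (minThroughput γ t '' timeShares K t)

theorem minThroughput_le (i : Fin K) : minThroughput γ t τ ≤ throughput (γ i * t) (τ i) :=
  Finset.inf'_le _ (Finset.mem_univ i)

theorem lt_minThroughput_iff : m < minThroughput γ t τ ↔ ∀ i, m < throughput (γ i * t) (τ i) := by
  simp [minThroughput, Finset.lt_inf'_iff]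

theorem minThroughput_mono (hγ : ∀ i, 0 < γ i) (ht : 0 < t) {τ' : Fin K → ℝ}
    (hτ : ∀ i, 0 ≤ τ i) (h : τ ≤ τ') : minThroughput γ t τ ≤ minThroughput γ t τ' :=
  Finset.le_inf' _ _ fun i _ => (minThroughput_le i).trans <|
    (strictMonoOn_throughput (mul_pos (hγ i) ht)).monotoneOn (hτ i) ((hτ i).trans (h i)) (h i)

theorem bddAbove_minThroughput_image (hγ : ∀ i, 0 ≤ γ i) (ht : 0 ≤ t) :
    BddAbove (minThroughput γ t '' timeShares K t) := by
  obtain ⟨i⟩ := ‹Nonempty (Fin K)›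
  refine ⟨γ i * t / log 2, ?_⟩
  rintro _ ⟨τ, hτ, rfl⟩
  exact (minThroughput_le i).trans (throughput_le (mul_nonneg (hγ i) ht) (hτ.1 i).1)

theorem minThroughput_le_maxMinThroughput (hγ : ∀ i, 0 ≤ γ i) (ht : 0 ≤ t)
    (hτ : τ ∈ timeShares K t) : minThroughput γ t τ ≤ maxMinThroughput γ t :=
  le_csSup (bddAbove_minThroughput_image hγ ht) ⟨τ, hτ, rfl⟩

theorem concaveOn_minThroughput (hγ : ∀ i, 0 ≤ γ i) :
    ConcaveOn ℝ {p : ℝ × (Fin K → ℝ) | p.1 ∈ Icc 0 1 ∧ p.2 ∈ timeShares K p.1}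
      fun p => minThroughput γ p.1 p.2 := by
  refine ConcaveOn.finset_inf' _ fun i _ =>
    ⟨convex_graph_timeShares, fun p hp q hq a b ha hb hab => ?_⟩
  have h := throughput_add_le (mul_nonneg (hγ i) hp.1.1) (mul_nonneg (hγ i) hq.1.1)
    (hp.2.1 i).1 (hq.2.1 i).1 ha hb hab
  show a * throughput (γ i * p.1) (p.2 i) + b * throughput (γ i * q.1) (q.2 i) ≤
    throughput (γ i * (a * p.1 + b * q.1)) (a * p.2 i + b * q.2 i)
  rwa [mul_add, mul_left_comm, mul_left_comm (γ i)]

theorem concaveOn_maxMinThroughput (hγ : ∀ i, 0 ≤ γ i) :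
    ConcaveOn ℝ (Icc 0 1) (maxMinThroughput γ) :=
  (concaveOn_minThroughput hγ).sSup_image (fun _ ht => ⟨0, zero_mem_timeShares ht.2⟩)
    fun _ ht => bddAbove_minThroughput_image hγ ht.1

end MinThroughput

section Optimum

variable {K : ℕ} [Nonempty (Fin K)] {γ : Fin K → ℝ} {t m : ℝ} {τ : Fin K → ℝ}

theorem maxMinThroughput_pos (hγ : ∀ i, 0 < γ i) (ht : t ∈ Ioo 0 1) :
    0 < maxMinThroughput γ t := by
  have hK : (0 : ℝ) < K := by exact_mod_cast Fin.pos_iff_nonempty.2 ‹_›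
  have hx : 0 < (1 - t) / K := div_pos (sub_pos.2 ht.2) hK
  have hmem : (fun _ => (1 - t) / K) ∈ timeShares K t := by
    refine (mem_timeShares_iff ht.1.le).2 ⟨fun _ => hx.le, le_of_eq ?_⟩
    simp only [Finset.sum_const, Finset.card_univ, Fintype.card_fin, nsmul_eq_mul]
    field_simp
  exact (lt_minThroughput_iff.2 fun i => throughput_pos (mul_pos (hγ i) ht.1) hx).trans_le
    (minThroughput_le_maxMinThroughput (fun i => (hγ i).le) ht.1.le hmem)

theorem exists_minThroughput_eq_maxMinThroughput (hγ : ∀ i, 0 < γ i) (ht : t ∈ Ioo 0 1) :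
    ∃ σ ∈ timeShares K t, minThroughput γ t σ = maxMinThroughput γ t := by
  have hcont : ContinuousOn (minThroughput γ t) (timeShares K t) :=
    ContinuousOn.finset_inf'_apply _ fun i _ =>
      (continuousOn_throughput (mul_pos (hγ i) ht.1)).comp (continuous_apply i).continuousOn
        fun _ hτ => (hτ.1 i).1
  obtain ⟨σ, hσ, hmax⟩ :=
    isCompact_timeShares.exists_isMaxOn ⟨0, zero_mem_timeShares ht.2.le⟩ hcont
  exact ⟨σ, hσ,
    (IsGreatest.csSup_eq ⟨mem_image_of_mem _ hσ, forall_mem_image.2 fun _ hx => hmax hx⟩).symm⟩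

theorem exists_pos_sum_eq_maxMinThroughput (hγ : ∀ i, 0 < γ i) (ht : t ∈ Ioo 0 1) :
    ∃ σ ∈ timeShares K t, (∀ i, 0 < σ i) ∧ ∑ i, σ i = 1 - t ∧
      minThroughput γ t σ = maxMinThroughput γ t := by
  obtain ⟨σ, hσ, hσmax⟩ := exists_minThroughput_eq_maxMinThroughput hγ ht
  have hpos : ∀ i, 0 < σ i := fun i => (hσ.1 i).1.lt_of_ne fun h => by
    have := (maxMinThroughput_pos hγ ht).trans_le (hσmax ▸ minThroughput_le i)
    simp [← h] at this
  have hsum : 0 < ∑ i, σ i := Finset.sum_pos (fun i _ => hpos i) Finset.univ_nonempty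
  set r := (1 - t) / ∑ i, σ i
  have hr : 1 ≤ r := (one_le_div hsum).2 hσ.2
  have hrσ : ∑ i, r * σ i = 1 - t := by rw [← Finset.mul_sum, div_mul_cancel₀ _ hsum.ne']
  have hmem : (fun i => r * σ i) ∈ timeShares K t :=
    (mem_timeShares_iff ht.1.le).2 ⟨fun i => mul_nonneg (by linarith) (hpos i).le, hrσ.le⟩
  refine ⟨_, hmem, fun i => mul_pos (by linarith) (hpos i), hrσ,
    le_antisymm (minThroughput_le_maxMinThroughput (fun i => (hγ i).le) ht.1.le hmem) ?_⟩
  rw [← hσmax]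
  exact minThroughput_mono hγ ht.1 (fun i => (hpos i).le) fun i =>
    le_mul_of_one_le_left (hpos i).le hr

theorem lt_maxMinThroughput (hγ : ∀ i, 0 < γ i) (ht : 0 < t) (hτ : τ ∈ timeShares K t)
    {i₀ : Fin K} (hτi₀ : 0 < τ i₀) (hm : ∀ i, m ≤ throughput (γ i * t) (τ i))
    (hmi₀ : m < throughput (γ i₀ * t) (τ i₀)) : m < maxMinThroughput γ t := by
  classical
  have hthr := throughput_pos (mul_pos (hγ i₀) ht) hτi₀
  obtain ⟨l, hml, hl₁⟩ := exists_between ((div_lt_one hthr).2 hmi₀)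
  set s := max l 0
  have hms : m < s * throughput (γ i₀ * t) (τ i₀) :=
    (div_lt_iff₀ hthr).1 (hml.trans_le (le_max_left _ _))
  have hs₀ : 0 ≤ s := le_max_right _ _
  have hs₁ : s < 1 := max_lt hl₁ one_pos
  -- shrink user `i₀`'s share by the factor `s`, spread the freed time evenly over the others
  have hK : (0 : ℝ) < K := by exact_mod_cast Fin.pos_iff_nonempty.2 ‹_›
  have hδ : 0 < (1 - s) * τ i₀ / K := div_pos (mul_pos (sub_pos.2 hs₁) hτi₀) hK
  set τ' := Function.update (fun i => τ i + (1 - s) * τ i₀ / K) i₀ (s * τ i₀)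
  have hτ' : τ' ∈ timeShares K t := by
    refine (mem_timeShares_iff ht.le).2 ⟨fun i => ?_, ?_⟩
    · rcases eq_or_ne i i₀ with rfl | hi
      · simp only [τ', Function.update_self]; positivity
      · simp only [τ', Function.update_of_ne hi]; linarith [(hτ.1 i).1]
    · have hfreed : ∑ i ∈ Finset.univ \ {i₀}, (1 - s) * τ i₀ / K ≤ (1 - s) * τ i₀ := by
        refine (Finset.sum_le_sum_of_subset_of_nonneg (Finset.subset_univ _)
          fun _ _ _ => hδ.le).trans_eq ?_
        simp only [Finset.sum_const, Finset.card_univ, Fintype.card_fin, nsmul_eq_mul]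
        field_simp
      rw [Finset.sum_update_of_mem (Finset.mem_univ _), Finset.sum_add_distrib]
      linarith [Finset.sum_eq_add_sum_sdiff_singleton_of_mem (Finset.mem_univ i₀) τ, hτ.2]
  refine (lt_minThroughput_iff.2 fun i => ?_).trans_le
    (minThroughput_le_maxMinThroughput (fun i => (hγ i).le) ht.le hτ')
  rcases eq_or_ne i i₀ with rfl | hi
  · simp only [τ', Function.update_self]
    exact hms.trans_le (mul_throughput_le (mul_pos (hγ i) ht).le hτi₀.le hs₀ hs₁.le)
  · simp only [τ', Function.update_of_ne hi]
    exact (hm i).trans_lt (strictMonoOn_throughput (mul_pos (hγ i) ht) (hτ.1 i).1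
      (by linarith [(hτ.1 i).1] : (0 : ℝ) ≤ τ i + _) (lt_add_of_pos_right _ hδ))

end Optimum

theorem exists_mul_div_ne_mul_div {K : ℕ} {γ σ₁ σ₂ : Fin K → ℝ} {t₁ t₂ : ℝ} (hγ : ∀ i, γ i ≠ 0)
    (hσ₁ : ∀ i, σ₁ i ≠ 0) (hσ₂ : ∀ i, σ₂ i ≠ 0) (hsum₁ : ∑ i, σ₁ i = 1 - t₁)
    (hsum₂ : ∑ i, σ₂ i = 1 - t₂) (hne : t₁ ≠ t₂) :
    ∃ i, γ i * t₁ / σ₁ i ≠ γ i * t₂ / σ₂ i := by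
  by_contra! h
  have hprop : ∀ i, t₁ * σ₂ i = t₂ * σ₁ i := fun i => by
    have := h i
    rw [div_eq_div_iff (hσ₁ i) (hσ₂ i), mul_assoc, mul_assoc] at this
    exact mul_left_cancel₀ (hγ i) (by linarith)
  have hsum := Finset.sum_congr rfl fun i (_ : i ∈ Finset.univ) => hprop i
  rw [← Finset.mul_sum, ← Finset.mul_sum, hsum₁, hsum₂] at hsum
  exact hne (by linarith)

theorem strictConcaveOn_maxMinThroughput {K : ℕ} [Nonempty (Fin K)] {γ : Fin K → ℝ}
    (hγ : ∀ i, 0 < γ i) : StrictConcaveOn ℝ (Ioo 0 1) (maxMinThroughput γ) := by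
  refine ⟨convex_Ioo 0 1, fun t₁ ht₁ t₂ ht₂ hne a b ha hb hab => ?_⟩
  simp only [smul_eq_mul]
  obtain ⟨σ₁, hσ₁, hpos₁, hsum₁, hmax₁⟩ := exists_pos_sum_eq_maxMinThroughput hγ ht₁
  obtain ⟨σ₂, hσ₂, hpos₂, hsum₂, hmax₂⟩ := exists_pos_sum_eq_maxMinThroughput hγ ht₂
  obtain ⟨i₀, hi₀⟩ := exists_mul_div_ne_mul_div (fun i => (hγ i).ne') (fun i => (hpos₁ i).ne')
    (fun i => (hpos₂ i).ne') hsum₁ hsum₂ hne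
  have hc₁ : ∀ i, 0 ≤ γ i * t₁ := fun i => (mul_pos (hγ i) ht₁.1).le
  have hc₂ : ∀ i, 0 ≤ γ i * t₂ := fun i => (mul_pos (hγ i) ht₂.1).le
  have hγt : ∀ i, γ i * (a * t₁ + b * t₂) = a * (γ i * t₁) + b * (γ i * t₂) := fun i => by ring
  have hcomb : ∀ i, a * maxMinThroughput γ t₁ + b * maxMinThroughput γ t₂ ≤
      a * throughput (γ i * t₁) (σ₁ i) + b * throughput (γ i * t₂) (σ₂ i) := fun i => by
    rw [← hmax₁, ← hmax₂]
    exact add_le_add (mul_le_mul_of_nonneg_left (minThroughput_le i) ha.le)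
      (mul_le_mul_of_nonneg_left (minThroughput_le i) hb.le)
  refine lt_maxMinThroughput hγ (by nlinarith [ht₁.1, ht₂.1])
    (smul_add_smul_mem_timeShares hσ₁ hσ₂ ha.le hb.le hab) (i₀ := i₀)
    (by simpa using add_pos (mul_pos ha (hpos₁ i₀)) (mul_pos hb (hpos₂ i₀))) (fun i => ?_) ?_
  · rw [hγt]
    exact (hcomb i).trans
      (throughput_add_le (hc₁ i) (hc₂ i) (hpos₁ i).le (hpos₂ i).le ha.le hb.le hab)
  · rw [hγt]
    exact (hcomb i₀).trans_lt
      (throughput_add_lt (hc₁ i₀) (hc₂ i₀) (hpos₁ i₀) (hpos₂ i₀) hi₀ ha hb)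

/-- The value function g(τ₀) of the inner min-throughput maximization is concave on
[0,1], and strictly concave on (0,1). -/
theorem stmt_10 (K : ℕ) (hK : 0 < K) (γ : Fin K → ℝ) (hγ : ∀ i, 0 < γ i)
    (g : ℝ → ℝ)
    (hg : ∀ t : ℝ, g t = sSup {v : ℝ | ∃ τ : Fin K → ℝ,
      (∀ i, τ i ∈ Set.Icc (0 : ℝ) 1) ∧ (∑ i, τ i ≤ 1 - t) ∧
      v = Finset.univ.inf'
        (Finset.univ_nonempty_iff.mpr (Fin.pos_iff_nonempty.mp hK))
        (fun i => τ i * Real.logb 2 (1 + γ i * t / τ i))}) :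
    ConcaveOn ℝ (Set.Icc (0 : ℝ) 1) g ∧
    (∀ t₁ ∈ Set.Ioo (0 : ℝ) 1, ∀ t₂ ∈ Set.Ioo (0 : ℝ) 1, t₁ ≠ t₂ →
      ∀ θ ∈ Set.Ioo (0 : ℝ) 1,
        θ * g t₁ + (1 - θ) * g t₂ < g (θ * t₁ + (1 - θ) * t₂)) := by
  have : Nonempty (Fin K) := Fin.pos_iff_nonempty.mp hK
  obtain rfl : g = maxMinThroughput γ := funext fun t => (hg t).trans <| congrArg sSup <|
    Set.ext fun _ => ⟨fun ⟨τ, hτ₁, hτ₂, hv⟩ => ⟨τ, ⟨hτ₁, hτ₂⟩, hv.symm⟩,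
      fun ⟨τ, ⟨hτ₁, hτ₂⟩, hv⟩ => ⟨τ, hτ₁, hτ₂, hv.symm⟩⟩
  exact ⟨concaveOn_maxMinThroughput fun i => (hγ i).le, fun _ ht₁ _ ht₂ hne θ hθ =>
    (strictConcaveOn_maxMinThroughput hγ).2 ht₁ ht₂ hne hθ.1 (sub_pos.2 hθ.2) (add_sub_cancel θ 1)⟩
end

section
/- For the max-min problem max over (τ₀, τ₁,…,τ_K) ≥ 0 with Σ_{i=0}^K τᵢ ≤ 1 of min_i τᵢ·log₂(1 + γᵢ·τ₀/τᵢ), at any optimal solution with positive value, all throughputs are equal: τᵢ·log₂(1 + γᵢ·τ₀/τᵢ) = τⱼ·log₂(1 + γⱼ·τ₀/τⱼ) for all i, j, and Σ_{i=0}^K τᵢ = 1. -/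
open Real

lemma aux_mono {a s t : ℝ} (ha : 0 < a) (hs : 0 < s) (hst : s < t) :
    s * Real.logb 2 (1 + a / s) < t * Real.logb 2 (1 + a / t) := by
  have ht : 0 < t := hs.trans hst
  have hu : 0 < a / t := div_pos ha ht
  have hv : 0 < a / s := div_pos ha hs
  have huv : a / t < a / s := div_lt_div_of_pos_left ha hs hst
  have hp : 1 < (a / s) / (a / t) := (one_lt_div hu).mpr huv
  have hb : 1 + ((a / s) / (a / t)) * (a / t) < (1 + a / t) ^ ((a / s) / (a / t)) :=
    one_add_mul_self_lt_rpow_one_add (by linarith) hu.ne' hp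
  rw [div_mul_cancel₀ _ hu.ne'] at hb
  have h1u : (0:ℝ) < 1 + a / t := by linarith
  have hlog : Real.log (1 + a / s) < ((a / s) / (a / t)) * Real.log (1 + a / t) := by
    have := Real.log_lt_log (by linarith) hb
    rwa [Real.log_rpow h1u] at this
  have hkey : s * Real.log (1 + a / s) < t * Real.log (1 + a / t) := by
    have h2 : s * (((a / s) / (a / t)) * Real.log (1 + a / t)) = t * Real.log (1 + a / t) := by
      field_simp
    calc s * Real.log (1 + a / s) < s * (((a / s) / (a / t)) * Real.log (1 + a / t)) := by
          exact (mul_lt_mul_iff_right₀ hs).mpr hlog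
      _ = t * Real.log (1 + a / t) := h2
  have hl2 : 0 < Real.log 2 := Real.log_pos one_lt_two
  simp only [Real.logb, div_eq_mul_inv, ← mul_assoc]
  exact mul_lt_mul_of_pos_right hkey (by positivity)

lemma aux_scale {a t c : ℝ} (ha : 0 < a) (ht : 0 < t) (hc0 : 0 < c) (hc1 : c ≤ 1) :
    c * (t * Real.logb 2 (1 + a / t)) ≤ (c * t) * Real.logb 2 (1 + a / (c * t)) := by
  have hct : 0 < c * t := mul_pos hc0 ht
  have h1 : a / t ≤ a / (c * t) := by
    apply div_le_div_of_nonneg_left ha.le hct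
    nlinarith
  have h2 : Real.logb 2 (1 + a / t) ≤ Real.logb 2 (1 + a / (c * t)) := by
    apply Real.logb_le_logb_of_le one_lt_two
    · positivity
    · linarith
  calc c * (t * Real.logb 2 (1 + a / t)) = (c * t) * Real.logb 2 (1 + a / t) := by ring
    _ ≤ (c * t) * Real.logb 2 (1 + a / (c * t)) := by
        exact mul_le_mul_of_nonneg_left h2 hct.le

/-- At any optimal solution of the max-min problem with positive value, all user
throughputs are equal and the total time constraint is tight. -/
theorem stmt_12 (K : ℕ) (hK : 0 < K) (γ : Fin K → ℝ) (hγ : ∀ i, 0 < γ i)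
    (τ₀ : ℝ) (τ : Fin K → ℝ) (h0 : 0 ≤ τ₀) (hτ : ∀ i, 0 ≤ τ i)
    (hsum : τ₀ + ∑ i, τ i ≤ 1)
    (hopt : ∀ (s0 : ℝ) (s : Fin K → ℝ), 0 ≤ s0 → (∀ i, 0 ≤ s i) →
      s0 + ∑ i, s i ≤ 1 →
      Finset.univ.inf'
        (Finset.univ_nonempty_iff.mpr (Fin.pos_iff_nonempty.mp hK))
        (fun i => s i * Real.logb 2 (1 + γ i * s0 / s i)) ≤
      Finset.univ.inf'
        (Finset.univ_nonempty_iff.mpr (Fin.pos_iff_nonempty.mp hK))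
        (fun i => τ i * Real.logb 2 (1 + γ i * τ₀ / τ i)))
    (hpos : 0 < Finset.univ.inf'
        (Finset.univ_nonempty_iff.mpr (Fin.pos_iff_nonempty.mp hK))
        (fun i => τ i * Real.logb 2 (1 + γ i * τ₀ / τ i))) :
    (∀ i j : Fin K,
      τ i * Real.logb 2 (1 + γ i * τ₀ / τ i) =
      τ j * Real.logb 2 (1 + γ j * τ₀ / τ j)) ∧
    τ₀ + ∑ i, τ i = 1 := by
  have hne := Finset.univ_nonempty_iff.mpr (Fin.pos_iff_nonempty.mp hK)
  set R : Fin K → ℝ := fun i => τ i * Real.logb 2 (1 + γ i * τ₀ / τ i) with hR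
  set m : ℝ := Finset.univ.inf' hne R with hm
  have hmle : ∀ i, m ≤ R i := fun i => Finset.inf'_le _ (Finset.mem_univ i)
  have hRpos : ∀ i, 0 < R i := fun i => lt_of_lt_of_le hpos (hmle i)
  have hτpos : ∀ i, 0 < τ i := by
    intro i
    rcases lt_or_eq_of_le (hτ i) with h | h
    · exact h
    · exfalso; have := hRpos i; rw [hR] at this; simp [← h] at this
  have hτ0pos : 0 < τ₀ := by
    rcases lt_or_eq_of_le h0 with h | h
    · exact h
    · exfalso
      have := hRpos ⟨0, hK⟩
      rw [hR] at this
      simp [← h] at this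
  -- tightness
  have htight : τ₀ + ∑ i, τ i = 1 := by
    by_contra hne1
    have hS1 : τ₀ + ∑ i, τ i < 1 := lt_of_le_of_ne hsum hne1
    set S : ℝ := τ₀ + ∑ i, τ i with hSdef
    have hSpos : 0 < S := by
      have : 0 ≤ ∑ i, τ i := Finset.sum_nonneg fun i _ => hτ i
      positivity
    set c : ℝ := 1 / S with hc
    have hc1 : 1 < c := by rw [hc, lt_div_iff₀ hSpos]; linarith
    have hcpos : 0 < c := by positivity
    have key := hopt (c * τ₀) (fun i => c * τ i) (by positivity)
      (fun i => by have := (hτ i); positivity)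
      (by
        have : c * τ₀ + ∑ i, c * τ i = c * S := by
          rw [hSdef, ← Finset.mul_sum]; ring
        rw [this, hc, one_div, inv_mul_cancel₀ hSpos.ne'])
    have heq : ∀ i : Fin K, (c * τ i) * Real.logb 2 (1 + γ i * (c * τ₀) / (c * τ i))
        = c * R i := by
      intro i
      rw [hR]
      rw [show γ i * (c * τ₀) = c * (γ i * τ₀) by ring, mul_div_mul_left _ _ hcpos.ne']
      ring
    have hge : c * m ≤ Finset.univ.inf' hne
        (fun i => (c * τ i) * Real.logb 2 (1 + γ i * (c * τ₀) / (c * τ i))) := by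
      apply Finset.le_inf'
      intro i _
      rw [heq i]
      exact mul_le_mul_of_nonneg_left (hmle i) hcpos.le
    have : c * m ≤ m := le_trans hge key
    nlinarith
  refine ⟨?_, htight⟩
  -- all throughputs equal m
  have hall : ∀ i, R i = m := by
    intro p
    by_contra hp
    have hmp : m < R p := lt_of_le_of_ne (hmle p) (Ne.symm hp)
    obtain ⟨j, _, hj⟩ := Finset.exists_mem_eq_inf' hne R
    have hjp : j ≠ p := by
      intro h; rw [h] at hj; exact absurd hj (ne_of_lt hmp)
    have h2K : 1 < K := by
      have := Fintype.one_lt_card_iff.mpr ⟨j, p, hjp⟩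
      simpa using this
    have hK1 : (0:ℝ) < (K:ℝ) - 1 := by
      have : (1:ℝ) < (K:ℝ) := by exact_mod_cast h2K
      linarith
    set lam : ℝ := (m / R p + 1) / 2 with hlam
    have hRp := hRpos p
    have hdiv : m / R p * R p = m := div_mul_cancel₀ _ hRp.ne'
    have hdivlt : m / R p < 1 := (div_lt_one hRp).mpr hmp
    have hdivpos : 0 < m / R p := div_pos hpos hRp
    have hlam0 : 0 < lam := by rw [hlam]; linarith
    have hlam1 : lam < 1 := by rw [hlam]; linarith
    have hlamm : m < lam * R p := by
      rw [hlam]; nlinarith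
    set d : ℝ := (1 - lam) * τ p / ((K:ℝ) - 1) with hd
    have hdpos : 0 < d := by
      rw [hd]; exact div_pos (mul_pos (by linarith) (hτpos p)) hK1
    set s : Fin K → ℝ := fun i => if i = p then lam * τ p else τ i + d with hs
    have hsnn : ∀ i, 0 ≤ s i := by
      intro i; rw [hs]; dsimp only
      split
      · exact le_of_lt (mul_pos hlam0 (hτpos p))
      · have := hτ i; linarith
    have hssum : ∑ i, s i = ∑ i, τ i := by
      rw [← Finset.add_sum_erase _ s (Finset.mem_univ p),
          ← Finset.add_sum_erase _ τ (Finset.mem_univ p)]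
      have h1 : ∑ i ∈ Finset.univ.erase p, s i
          = ∑ i ∈ Finset.univ.erase p, (τ i + d) := by
        apply Finset.sum_congr rfl
        intro i hi
        rw [hs]; dsimp only
        rw [if_neg (Finset.mem_erase.mp hi).1]
      have h2 : ∑ i ∈ Finset.univ.erase p, (τ i + d)
          = (∑ i ∈ Finset.univ.erase p, τ i) + ((K:ℝ) - 1) * d := by
        rw [Finset.sum_add_distrib, Finset.sum_const, Finset.card_erase_of_mem (Finset.mem_univ p)]
        simp only [Finset.card_univ, Fintype.card_fin, nsmul_eq_mul]
        rw [Nat.cast_sub hK, Nat.cast_one]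
      have h3 : ((K:ℝ) - 1) * d = (1 - lam) * τ p := by
        rw [hd, mul_div_cancel₀ _ hK1.ne']
      have h4 : s p = lam * τ p := by simp [hs]
      rw [h1, h2, h3, h4]; ring
    have key := hopt τ₀ s h0 hsnn (by rw [hssum, htight])
    obtain ⟨q, _, hq⟩ := Finset.exists_mem_eq_inf' hne
      (fun i => s i * Real.logb 2 (1 + γ i * τ₀ / s i))
    rw [hq] at key
    by_cases hqp : q = p
    · subst hqp
      have hsq : s q = lam * τ q := by simp [hs]
      rw [hsq] at key
      have := aux_scale (a := γ q * τ₀) (t := τ q) (c := lam)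
        (mul_pos (hγ q) hτ0pos) (hτpos q) hlam0 hlam1.le
      have hRq : R q = τ q * Real.logb 2 (1 + γ q * τ₀ / τ q) := rfl
      rw [← hRq] at this
      nlinarith [this, key, hlamm]
    · have hsq : s q = τ q + d := by rw [hs]; simp [hqp]
      rw [hsq] at key
      have := aux_mono (a := γ q * τ₀) (s := τ q) (t := τ q + d)
        (mul_pos (hγ q) hτ0pos) (hτpos q) (by linarith)
      have hRq : R q = τ q * Real.logb 2 (1 + γ q * τ₀ / τ q) := rfl
      rw [← hRq] at this
      have := hmle q
      linarith
  exact fun i j => (hall i).trans (hall j).symm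
end
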